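/- arXiv:2007.01541 — 2 statements merged into one kernel-verified Lean document; each statement's English description precedes it below -/
import Mathlib

section
/- Let A ∈ ℝ^{N×N} have a symmetric sparsity pattern and admit a Cholesky decomposition P A Pᵀ = L Lᵀ for a permutation P corresponding to an ordering π of the vertex set V = {1,…,N} of the adjacency graph G = (V, E), E = {{i,j} : a_{ij} ≠ 0}. Assuming no cancellation of nonzero entries occurs during elimination, for i > j the entry ℓ_{ij} is nonzero if and only if there exists a path i = v₁, v₂, …, v_{k+1} = j in G with π(v_t) < min{π(i), π(j)} for all 2 ≤ t ≤ k. -/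
/-- Symbolic fill-in model of Gaussian elimination without cancellation: an entry
`(i,j)` of the Cholesky factor is (symbolically) nonzero iff it is nonzero in the
original matrix, or becomes nonzero through elimination of a common neighbor `k`
eliminated before both `i` and `j` (π gives the elimination ordering). -/
inductive SymbolicFill {N : ℕ} (adj : Fin N → Fin N → Prop) (π : Equiv.Perm (Fin N)) :
    Fin N → Fin N → Prop
  | base {i j : Fin N} : adj i j → SymbolicFill adj π i j
  | fill {i j k : Fin N} : π k < π i → π k < π j →
      SymbolicFill adj π i k → SymbolicFill adj π k j → SymbolicFill adj π i j

namespace List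

variable {α : Type*}

theorem eq_append_cons_notMem_right_of_mem {a : α} {l : List α} (h : a ∈ l) :
    ∃ s t, l = s ++ a :: t ∧ a ∉ t := by
  obtain ⟨s, t, hl, ht⟩ := eq_append_cons_of_mem (mem_reverse.2 h)
  exact ⟨t.reverse, s.reverse, by simpa using congrArg reverse hl, by simpa using ht⟩

theorem isChain_cons_append_cons_append_singleton {R : α → α → Prop} {a b c : α}
    {s t : List α} :
    IsChain R (a :: (s ++ b :: t ++ [c])) ↔
      IsChain R (a :: (s ++ [b])) ∧ IsChain R (b :: (t ++ [c])) := by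
  rw [append_assoc, cons_append, isChain_cons_split]

end List

namespace SymbolicFill

open List

variable {N : ℕ} {adj : Fin N → Fin N → Prop} {π : Equiv.Perm (Fin N)}

theorem exists_path {i j : Fin N} (h : SymbolicFill adj π i j) :
    ∃ l : List (Fin N), IsChain adj (i :: (l ++ [j])) ∧ ∀ v ∈ l, π v < π i ∧ π v < π j := by
  induction h with
  | base h => exact ⟨[], isChain_pair.2 h, by simp⟩
  | @fill i j k hki hkj _ _ ih₁ ih₂ =>
    obtain ⟨l₁, hc₁, hl₁⟩ := ih₁
    obtain ⟨l₂, hc₂, hl₂⟩ := ih₂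
    refine ⟨l₁ ++ k :: l₂, isChain_cons_append_cons_append_singleton.2 ⟨hc₁, hc₂⟩, ?_⟩
    intro v hv
    rcases mem_append.1 hv with hv | hv
    · exact ⟨(hl₁ v hv).1, (hl₁ v hv).2.trans hkj⟩
    rcases mem_cons.1 hv with rfl | hv
    · exact ⟨hki, hkj⟩
    · exact ⟨(hl₂ v hv).1.trans hki, (hl₂ v hv).2⟩

/-- A path is split at its interior vertex `k` eliminated last, cutting at the first and at the
last visit of `k`: both pieces have interior vertices eliminated strictly before `k`. -/
theorem of_path {i j : Fin N} (l : List (Fin N)) (hc : IsChain adj (i :: (l ++ [j])))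
    (hl : ∀ v ∈ l, π v < π i ∧ π v < π j) : SymbolicFill adj π i j := by
  rcases eq_or_ne l [] with rfl | hne
  · exact .base (isChain_pair.1 hc)
  obtain ⟨k, hk, hmax⟩ := l.toFinset.exists_max_image π (by simpa using hne)
  rw [mem_toFinset] at hk
  have hlt : ∀ v ∈ l, v ≠ k → π v < π k := fun v hv hvk =>
    (hmax v (mem_toFinset.2 hv)).lt_of_ne (π.injective.ne hvk)
  obtain ⟨s, t, hst, hks⟩ := eq_append_cons_of_mem hk
  obtain ⟨s', t', hst', hkt'⟩ := eq_append_cons_notMem_right_of_mem hk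
  have hik : SymbolicFill adj π i k := by
    refine of_path s (isChain_cons_append_cons_append_singleton.1 (hst ▸ hc)).1 fun v hv => ?_
    have hvl : v ∈ l := hst ▸ mem_append_left _ hv
    exact ⟨(hl v hvl).1, hlt v hvl (ne_of_mem_of_not_mem hv hks)⟩
  have hkj : SymbolicFill adj π k j := by
    refine of_path t' (isChain_cons_append_cons_append_singleton.1 (hst' ▸ hc)).2 fun v hv => ?_
    have hvl : v ∈ l := hst' ▸ mem_append_right _ (mem_cons_of_mem _ hv)
    exact ⟨hlt v hvl (ne_of_mem_of_not_mem hv hkt'), (hl v hvl).2⟩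
  exact .fill (hl k hk).1 (hl k hk).2 hik hkj
termination_by l.length
decreasing_by
  · simp [hst]
  · simp [hst']; omega

end SymbolicFill

theorem symbolicFill_iff_path_general
    {N : ℕ}
    (π : Equiv.Perm (Fin N))
    (adj : Fin N → Fin N → Prop)
    (i j : Fin N) :
    SymbolicFill adj π i j ↔
      ∃ l : List (Fin N), List.Chain adj i (l ++ [j]) ∧
        ∀ v ∈ l, π v < π i ∧ π v < π j :=
  ⟨SymbolicFill.exists_path, fun ⟨l, hc, hl⟩ => SymbolicFill.of_path l hc hl⟩

/-- Rose–Tarjan–Lueker: assuming no cancellation, in the Cholesky decomposition of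
`P A Pᵀ` the entry `ℓ_{ij}` (for `π j < π i`) is nonzero iff there is a path
`i = v₁, v₂, …, v_{k+1} = j` in the adjacency graph of `A` whose interior
vertices `v_t` satisfy `π v_t < min (π i) (π j)`. -/
theorem symbolicFill_iff_path
    {N : ℕ} (A : Matrix (Fin N) (Fin N) ℝ)
    (hsym : ∀ i j : Fin N, A i j ≠ 0 ↔ A j i ≠ 0)  -- symmetric sparsity pattern
    (π : Equiv.Perm (Fin N))
    (adj : Fin N → Fin N → Prop)
    (hadj : ∀ i j : Fin N, adj i j ↔ (A i j ≠ 0 ∧ i ≠ j))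
    (i j : Fin N) (hij : π j < π i) :
    SymbolicFill adj π i j ↔
      ∃ l : List (Fin N), List.Chain adj i (l ++ [j]) ∧
        ∀ v ∈ l, π v < π i ∧ π v < π j :=
  symbolicFill_iff_path_general π adj i j
end

section
/- For the block matrix M = [[A, 0, B], [0, C, D], [Bᵀ, Dᵀ, E]] arising from a nested dissection ordering, if M is symmetric positive definite then its Cholesky factor has the block lower triangular structure [[L_A, 0, 0], [0, L_C, 0], [X, Y, L_S]]; in particular, the zero blocks coupling the first two diagonal blocks are preserved (no fill-in occurs between V₁ and V₂). -/
open Matrix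

/-- Index of a vertex in the nested dissection ordering `(V₁, V₂, S)`. -/
def ndIdx {n₁ n₂ s : ℕ} : (Fin n₁ ⊕ Fin n₂) ⊕ Fin s → ℕ
  | Sum.inl (Sum.inl i) => (i : ℕ)
  | Sum.inl (Sum.inr i) => n₁ + (i : ℕ)
  | Sum.inr i => n₁ + n₂ + (i : ℕ)

/-!
Row `p` of a lower triangular `L` with nonzero diagonal is recovered from row `p` of `L Lᵀ`
by forward substitution: `(L Lᵀ) p q = ∑_{k ≤ q} L p k L q k`, so if `(L Lᵀ) p q` vanishes
on an initial segment of the ordering, induction along that segment kills every `L p q` in it.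
For the nested dissection ordering, `V₁` is such an initial segment and the `(V₂, V₁)` block
of `M` is zero.
-/

section ForwardSubstitution

variable {ι R : Type*} [Fintype ι] [Semiring R] [NoZeroDivisors R]

theorem Matrix.apply_eq_zero_of_mul_transpose_apply_eq_zero (f : ι → ℕ)
    (hf : Function.Injective f) (L : Matrix ι ι R) (hL : ∀ p q, f p < f q → L p q = 0)
    (hdiag : ∀ q, L q q ≠ 0) (S : Set ι) (hS : ∀ q ∈ S, ∀ k, f k < f q → k ∈ S) (p : ι)
    (h0 : ∀ q ∈ S, (L * Lᵀ) p q = 0) : ∀ q ∈ S, L p q = 0 := by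
  refine fun q => (measure f).wf.induction (C := fun q => q ∈ S → L p q = 0) q fun q ih hq => ?_
  have hsum : ∑ k, L p k * L q k = 0 := by
    simpa only [mul_apply, transpose_apply] using h0 q hq
  have hsingle : L p q * L q q = 0 := by
    rw [← hsum, Finset.sum_eq_single q]
    · intro k _ hkq
      rcases lt_trichotomy (f k) (f q) with h | h | h
      · rw [ih k h (hS q hq k h), zero_mul]
      · exact absurd (hf h) hkq
      · rw [hL q k h, mul_zero]
    · simp
  exact (mul_eq_zero.mp hsingle).resolve_right (hdiag q)

end ForwardSubstitution

theorem ndIdx_injective {n₁ n₂ s : ℕ} :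
    Function.Injective (ndIdx : (Fin n₁ ⊕ Fin n₂) ⊕ Fin s → ℕ) := by
  rintro ((a | a) | a) ((b | b) | b) h <;> simp only [ndIdx] at h <;> grind

theorem mem_range_inl_inl_of_ndIdx_lt {n₁ n₂ s : ℕ} {q k : (Fin n₁ ⊕ Fin n₂) ⊕ Fin s}
    (hq : q ∈ Set.range (Sum.inl ∘ Sum.inl)) (h : ndIdx k < ndIdx q) :
    k ∈ Set.range (Sum.inl ∘ Sum.inl) := by
  obtain ⟨j, rfl⟩ := hq
  rcases k with (k | k) | k <;> simp only [ndIdx, Function.comp_apply] at h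
  · exact ⟨k, rfl⟩
  all_goals omega

theorem nested_dissection_no_fill_in_general
    {n₁ n₂ s : ℕ}
    (A : Matrix (Fin n₁) (Fin n₁) ℝ) (C : Matrix (Fin n₂) (Fin n₂) ℝ)
    (E : Matrix (Fin s) (Fin s) ℝ)
    (B : Matrix (Fin n₁) (Fin s) ℝ) (D : Matrix (Fin n₂) (Fin s) ℝ)
    (M L : Matrix ((Fin n₁ ⊕ Fin n₂) ⊕ Fin s) ((Fin n₁ ⊕ Fin n₂) ⊕ Fin s) ℝ)
    (hM : M = fromBlocks (fromBlocks A 0 0 C) (fromRows B D)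
      (fromCols Bᵀ Dᵀ) E)
    (hLtri : ∀ p q, ndIdx p < ndIdx q → L p q = 0)  -- L lower triangular
    (hLdiag : ∀ p, 0 < L p p)                        -- positive diagonal
    (hChol : L * Lᵀ = M) :
    ∀ (i : Fin n₂) (j : Fin n₁), L (Sum.inl (Sum.inr i)) (Sum.inl (Sum.inl j)) = 0 := by
  intro i j
  refine apply_eq_zero_of_mul_transpose_apply_eq_zero ndIdx ndIdx_injective L hLtri
    (fun q => (hLdiag q).ne') _ (fun q hq k => mem_range_inl_inl_of_ndIdx_lt hq) _ ?_ _ ⟨j, rfl⟩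
  rintro _ ⟨j', rfl⟩
  simp [hChol, hM]

/-- For the nested dissection block matrix `M = [[A,0,B],[0,C,D],[Bᵀ,Dᵀ,E]]`,
if `M` is symmetric positive definite and `L` is its Cholesky factor (lower
triangular with positive diagonal, `L Lᵀ = M`), then the block of `L` coupling
`V₂` and `V₁` vanishes: no fill-in occurs between `V₁` and `V₂`. -/
theorem nested_dissection_no_fill_in
    {n₁ n₂ s : ℕ}
    (A : Matrix (Fin n₁) (Fin n₁) ℝ) (C : Matrix (Fin n₂) (Fin n₂) ℝ)
    (E : Matrix (Fin s) (Fin s) ℝ)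
    (B : Matrix (Fin n₁) (Fin s) ℝ) (D : Matrix (Fin n₂) (Fin s) ℝ)
    (M L : Matrix ((Fin n₁ ⊕ Fin n₂) ⊕ Fin s) ((Fin n₁ ⊕ Fin n₂) ⊕ Fin s) ℝ)
    (hM : M = fromBlocks (fromBlocks A 0 0 C) (fromRows B D)
      (fromCols Bᵀ Dᵀ) E)
    (hMpd : M.PosDef)
    (hLtri : ∀ p q, ndIdx p < ndIdx q → L p q = 0)  -- L lower triangular
    (hLdiag : ∀ p, 0 < L p p)                        -- positive diagonal
    (hChol : L * Lᵀ = M) :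
    ∀ (i : Fin n₂) (j : Fin n₁), L (Sum.inl (Sum.inr i)) (Sum.inl (Sum.inl j)) = 0 :=
  nested_dissection_no_fill_in_general A C E B D M L hM hLtri hLdiag hChol
end
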